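/- Let Ω ∈ ℝ^{n×d} and Ω̃ ∈ ℝ^{ñ×d} be matrices such that the stacked matrix Ω_F = [Ω; Ω̃] ∈ ℝ^{(n+ñ)×d} is a frame with lower frame bound A > 0. Let B ∈ ℝ^{m₂×d} satisfy ‖B Ω̃† v‖₂ ≥ C₁₁‖v‖₂ for all v ∈ ℝ^{ñ} and ‖B(I − Ω̃†Ω̃)z‖₂ ≤ C₁₂‖z‖₂ for all z ∈ ℝ^d, where C₁₁ > 0 and C₁₂ ≥ 0. Then for every z ∈ ℝ^d, (1 − C₁₂/(A·C₁₁))·‖z‖₂ ≤ (1/A)·‖Ωz‖₂ + (1/(A·C₁₁))·‖Bz‖₂. -/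

import Mathlib

/-!
The frame bound gives `A‖z‖ ≤ ‖Ωz‖ + ‖Ω̃z‖`. To control `‖Ω̃z‖` through `B`, split
`Bz = B Ω̃† Ω̃ z + B (I − Ω̃† Ω̃) z`: the first term has norm at least `C₁₁‖Ω̃z‖` and the second at
most `C₁₂‖z‖`, so `C₁₁‖Ω̃z‖ ≤ ‖Bz‖ + C₁₂‖z‖`. Combining and dividing by `A C₁₁` gives the claim.
-/

open Matrix

/-- The Euclidean (ℓ₂) norm of a finitely-indexed real vector. -/
noncomputable def l2norm {ι : Type*} [Fintype ι] (v : ι → ℝ) : ℝ :=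
  Real.sqrt (∑ i, v i ^ 2)

/-- `P` is the Moore–Penrose pseudo-inverse of `Ω` (the four Penrose conditions). -/
def IsMoorePenroseInv {ι κ : Type*} [Fintype ι] [Fintype κ]
    (Ω : Matrix ι κ ℝ) (P : Matrix κ ι ℝ) : Prop :=
  Ω * P * Ω = Ω ∧ P * Ω * P = P ∧ (Ω * P)ᵀ = Ω * P ∧ (P * Ω)ᵀ = P * Ω

section l2norm

variable {ι κ : Type*} [Fintype ι] [Fintype κ]

lemma l2norm_eq_norm_toLp (v : ι → ℝ) : l2norm v = ‖WithLp.toLp 2 v‖ := by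
  simp [EuclideanSpace.norm_eq, l2norm, sq_abs]

lemma l2norm_add_le (u v : ι → ℝ) : l2norm (u + v) ≤ l2norm u + l2norm v := by
  simpa only [l2norm_eq_norm_toLp, WithLp.toLp_add] using norm_add_le _ _

lemma l2norm_sub_le (u v : ι → ℝ) : l2norm (u - v) ≤ l2norm u + l2norm v := by
  simpa only [l2norm_eq_norm_toLp, WithLp.toLp_sub] using norm_sub_le _ _

lemma l2norm_sum_elim_zero_right (u : ι → ℝ) :
    l2norm (Sum.elim u (0 : κ → ℝ)) = l2norm u := by
  simp [l2norm, Fintype.sum_sum_type]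

lemma l2norm_sum_elim_zero_left (v : κ → ℝ) :
    l2norm (Sum.elim (0 : ι → ℝ) v) = l2norm v := by
  simp [l2norm, Fintype.sum_sum_type]

lemma l2norm_sum_elim_le (u : ι → ℝ) (v : κ → ℝ) :
    l2norm (Sum.elim u v) ≤ l2norm u + l2norm v := by
  have hsplit : Sum.elim u v = Sum.elim u (0 : κ → ℝ) + Sum.elim (0 : ι → ℝ) v := by
    ext (i | k) <;> simp
  calc l2norm (Sum.elim u v)
      ≤ l2norm (Sum.elim u (0 : κ → ℝ)) + l2norm (Sum.elim (0 : ι → ℝ) v) :=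
        hsplit ▸ l2norm_add_le _ _
    _ = l2norm u + l2norm v := by rw [l2norm_sum_elim_zero_right, l2norm_sum_elim_zero_left]

end l2norm

lemma mul_l2norm_mulVec_le_of_mulVec_bounds {ι κ μ : Type*} [Fintype ι] [Fintype κ] [Fintype μ]
    (Ω : Matrix κ ι ℝ) (P : Matrix ι κ ℝ) (B : Matrix μ ι ℝ) {c₁ c₂ : ℝ}
    (hBP : ∀ v, c₁ * l2norm v ≤ l2norm (B *ᵥ (P *ᵥ v)))
    (hBI : ∀ z, l2norm (B *ᵥ (z - P *ᵥ (Ω *ᵥ z))) ≤ c₂ * l2norm z) (z : ι → ℝ) :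
    c₁ * l2norm (Ω *ᵥ z) ≤ l2norm (B *ᵥ z) + c₂ * l2norm z := by
  have hsplit : B *ᵥ (P *ᵥ (Ω *ᵥ z)) = B *ᵥ z - B *ᵥ (z - P *ᵥ (Ω *ᵥ z)) := by
    rw [mulVec_sub]; abel
  calc c₁ * l2norm (Ω *ᵥ z) ≤ l2norm (B *ᵥ (P *ᵥ (Ω *ᵥ z))) := hBP _
    _ ≤ l2norm (B *ᵥ z) + l2norm (B *ᵥ (z - P *ᵥ (Ω *ᵥ z))) :=
        hsplit ▸ l2norm_sub_le _ _
    _ ≤ l2norm (B *ᵥ z) + c₂ * l2norm z := by grw [hBI]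

theorem stmt_6_general {n nt d m₂ : ℕ}
    (Ω : Matrix (Fin n) (Fin d) ℝ) (Ωtil : Matrix (Fin nt) (Fin d) ℝ)
    (A : ℝ) (hA : 0 < A)
    -- The stacked matrix Ω_F = [Ω; Ω̃] is a frame with lower frame bound A:
    (hframe : ∀ z : Fin d → ℝ,
      A * l2norm z ≤ l2norm (Sum.elim (Ω.mulVec z) (Ωtil.mulVec z)))
    (P : Matrix (Fin d) (Fin nt) ℝ)
    (B : Matrix (Fin m₂) (Fin d) ℝ)
    (C₁₁ C₁₂ : ℝ) (hC₁₁ : 0 < C₁₁)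
    -- σ_min(B Ω̃†) ≥ C₁₁:
    (hBP : ∀ v : Fin nt → ℝ, C₁₁ * l2norm v ≤ l2norm (B.mulVec (P.mulVec v)))
    -- ‖B (I − Ω̃† Ω̃)‖ ≤ C₁₂:
    (hBI : ∀ z : Fin d → ℝ,
      l2norm (B.mulVec (z - P.mulVec (Ωtil.mulVec z))) ≤ C₁₂ * l2norm z) :
    ∀ z : Fin d → ℝ,
      (1 - C₁₂ / (A * C₁₁)) * l2norm z ≤
        (1 / A) * l2norm (Ω.mulVec z) + (1 / (A * C₁₁)) * l2norm (B.mulVec z) := by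
  intro z
  have hstacked : A * l2norm z ≤ l2norm (Ω *ᵥ z) + l2norm (Ωtil *ᵥ z) :=
    (hframe z).trans (l2norm_sum_elim_le _ _)
  have hΩtil := mul_l2norm_mulVec_le_of_mulVec_bounds Ωtil P B hBP hBI z
  have hAC : 0 < A * C₁₁ := mul_pos hA hC₁₁
  rw [← mul_le_mul_iff_right₀ hAC]
  calc A * C₁₁ * ((1 - C₁₂ / (A * C₁₁)) * l2norm z)
        = C₁₁ * (A * l2norm z) - C₁₂ * l2norm z := by field_simp
    _ ≤ C₁₁ * l2norm (Ω *ᵥ z) + l2norm (B *ᵥ z) := by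
        linarith [mul_le_mul_of_nonneg_left hstacked hC₁₁.le]
    _ = A * C₁₁ * ((1 / A) * l2norm (Ω *ᵥ z) + (1 / (A * C₁₁)) * l2norm (B *ᵥ z)) := by
        field_simp

/-- the key inequality behind the partial-frame recovery
guarantee. -/
theorem stmt_6 {n nt d m₂ : ℕ}
    (Ω : Matrix (Fin n) (Fin d) ℝ) (Ωtil : Matrix (Fin nt) (Fin d) ℝ)
    (A : ℝ) (hA : 0 < A)
    -- The stacked matrix Ω_F = [Ω; Ω̃] is a frame with lower frame bound A:
    (hframe : ∀ z : Fin d → ℝ,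
      A * l2norm z ≤ l2norm (Sum.elim (Ω.mulVec z) (Ωtil.mulVec z)))
    (P : Matrix (Fin d) (Fin nt) ℝ) (hP : IsMoorePenroseInv Ωtil P)
    (B : Matrix (Fin m₂) (Fin d) ℝ)
    (C₁₁ C₁₂ : ℝ) (hC₁₁ : 0 < C₁₁) (hC₁₂ : 0 ≤ C₁₂)
    -- σ_min(B Ω̃†) ≥ C₁₁:
    (hBP : ∀ v : Fin nt → ℝ, C₁₁ * l2norm v ≤ l2norm (B.mulVec (P.mulVec v)))
    -- ‖B (I − Ω̃† Ω̃)‖ ≤ C₁₂: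
    (hBI : ∀ z : Fin d → ℝ,
      l2norm (B.mulVec (z - P.mulVec (Ωtil.mulVec z))) ≤ C₁₂ * l2norm z) :
    ∀ z : Fin d → ℝ,
      (1 - C₁₂ / (A * C₁₁)) * l2norm z ≤
        (1 / A) * l2norm (Ω.mulVec z) + (1 / (A * C₁₁)) * l2norm (B.mulVec z) :=
  stmt_6_general Ω Ωtil A hA hframe P B C₁₁ C₁₂ hC₁₁ hBP hBI
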